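/- Let τ = (1 + √5)/2 and λ_k = (⌈k/τ⌉ + kτ)/τ² for k ∈ ℤ. Then for every n ≥ 1 and every k ∈ ℤ there exists an integer m with −n ≤ m ≤ 0 such that λ_{k+i+1} − λ_{k+i} = λ_{m+i+1} − λ_{m+i} for all 0 ≤ i < n. In other words, the left-hand ends of all possible n-letter words of the Fibonacci chain occur among the n+1 points λ_{−n}, …, λ_0. -/

import Mathlib

/-!
Writing `x = ⌈kα⌉ - kα ∈ [0,1)`, the increments `⌈(k+i)α⌉ - ⌈kα⌉ = ⌈iα - x⌉` depend on `k` only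
through `x`, and as a function of `x` each of them is constant between consecutive points of
`{fract (jα) : 0 ≤ j ≤ n}`. Choosing `m = -j` with `fract (jα)` the largest of these points
below `x` puts `m` and `k` in the same piece, so the words of length `n` starting at `k` and `m`
agree. For `α = 1/τ` the gaps of the Fibonacci chain are `(⌈(t+1)/τ⌉ - ⌈t/τ⌉ + τ)/τ²`.
-/

open MeasureTheory Set Filter

noncomputable section

/-- The golden mean `τ = (1 + √5)/2`. -/
def tau : ℝ := (1 + Real.sqrt 5) / 2

/-- The cut-and-project model set `Σ^Ω = { a + bτ : a, b ∈ ℤ, a - b/τ ∈ Ω }`. -/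
def SigmaSet (Ω : Set ℝ) : Set ℝ :=
  {x | ∃ a b : ℤ, x = (a : ℝ) + (b : ℝ) * tau ∧ (a : ℝ) - (b : ℝ) / tau ∈ Ω}

/-- The increasing enumeration `λ_k = (⌈k/τ⌉ + kτ)/τ²` of the rescaled Fibonacci
chain `Σ^{[0,τ²)}`. -/
def fibChain (k : ℤ) : ℝ := ((⌈(k : ℝ) / tau⌉ : ℝ) + (k : ℝ) * tau) / tau ^ 2

section FloorRing

variable {R : Type*} [CommRing R] [LinearOrder R] [IsStrictOrderedRing R] [FloorRing R]

theorem Int.fract_neg_eq_ceil_sub (a : R) : Int.fract (-a) = ⌈a⌉ - a := by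
  rw [Int.fract, Int.floor_neg]
  push_cast
  ring

theorem Int.ceil_add_sub_ceil (a b : R) : ⌈a + b⌉ - ⌈a⌉ = ⌈b - Int.fract (-a)⌉ := by
  rw [Int.fract_neg_eq_ceil_sub, show b - (⌈a⌉ - a) = a + b - ⌈a⌉ by ring, Int.ceil_sub_intCast]

theorem Int.ceil_sub_eq_ceil_sub {c s t : R} (hs : 0 ≤ s) (ht : t < 1) (hst : s ≤ t)
    (hc : ¬(s < Int.fract c ∧ Int.fract c ≤ t)) : ⌈c - t⌉ = ⌈c - s⌉ := by
  refine le_antisymm (Int.ceil_mono (by linarith)) (not_lt.mp fun hlt => hc ?_)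
  have hlo : c - t ≤ ⌈c - t⌉ := Int.le_ceil _
  have hhi : (⌈c - t⌉ : R) < c - s := Int.lt_ceil.mp hlt
  have hfract : Int.fract c = c - ⌈c - t⌉ :=
    Int.fract_eq_iff.mpr ⟨by linarith, by linarith, ⌈c - t⌉, by ring⟩
  constructor <;> linarith

theorem exists_ceil_mul_window_eq (α : R) (n : ℕ) (k : ℤ) :
    ∃ m : ℤ, -(n : ℤ) ≤ m ∧ m ≤ 0 ∧ ∀ i : ℕ, i ≤ n →
      ⌈((k + i : ℤ) : R) * α⌉ - ⌈(k : R) * α⌉ = ⌈((m + i : ℤ) : R) * α⌉ - ⌈(m : R) * α⌉ := by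
  set x := Int.fract (-(k * α))
  set S := (Finset.range (n + 1)).filter fun j : ℕ => Int.fract (j * α) ≤ x
  have h0 : 0 ∈ S := by simp [S, x, Int.fract_nonneg]
  obtain ⟨j, hjS, hmax⟩ := S.exists_max_image (fun j : ℕ => Int.fract (j * α)) ⟨0, h0⟩
  obtain ⟨hjn, hjx⟩ := Finset.mem_filter.mp hjS
  have hjn : j ≤ n := Nat.lt_succ_iff.mp (Finset.mem_range.mp hjn)
  refine ⟨-j, by omega, by omega, fun i hi => ?_⟩
  have hsplit (l : ℤ) : ((l + i : ℤ) : R) * α = l * α + i * α := by push_cast; ring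
  rw [hsplit, hsplit, Int.ceil_add_sub_ceil, Int.ceil_add_sub_ceil,
    show -((-j : ℤ) * α) = j * α by push_cast; ring]
  refine Int.ceil_sub_eq_ceil_sub (Int.fract_nonneg _) (Int.fract_lt_one _) hjx ?_
  rintro ⟨hlt, hle⟩
  have hiS : i ∈ S := Finset.mem_filter.mpr ⟨Finset.mem_range.mpr (by omega), hle⟩
  exact (hmax i hiS).not_gt hlt

theorem exists_ceil_mul_word_eq (α : R) (n : ℕ) (k : ℤ) :
    ∃ m : ℤ, -(n : ℤ) ≤ m ∧ m ≤ 0 ∧ ∀ i : ℕ, i < n →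
      ⌈((k + i + 1 : ℤ) : R) * α⌉ - ⌈((k + i : ℤ) : R) * α⌉ =
        ⌈((m + i + 1 : ℤ) : R) * α⌉ - ⌈((m + i : ℤ) : R) * α⌉ := by
  obtain ⟨m, hnm, hm0, hm⟩ := exists_ceil_mul_window_eq α n k
  refine ⟨m, hnm, hm0, fun i hi => ?_⟩
  have hsucc := hm (i + 1) hi
  have hself := hm i hi.le
  push_cast at hsucc hself ⊢
  rw [← add_assoc, ← add_assoc] at hsucc
  linarith

end FloorRing

theorem fibChain_add_one_sub (t : ℤ) :
    fibChain (t + 1) - fibChain t =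
      (((⌈((t + 1 : ℤ) : ℝ) * tau⁻¹⌉ - ⌈(t : ℝ) * tau⁻¹⌉ : ℤ) : ℝ) + tau) / tau ^ 2 := by
  simp only [fibChain, div_eq_mul_inv]
  push_cast
  ring

theorem statement13_general (n : ℕ) (k : ℤ) :
    ∃ m : ℤ, -(n : ℤ) ≤ m ∧ m ≤ 0 ∧
      ∀ i : ℕ, i < n →
        fibChain (k + (i : ℤ) + 1) - fibChain (k + (i : ℤ)) =
          fibChain (m + (i : ℤ) + 1) - fibChain (m + (i : ℤ)) := by
  obtain ⟨m, hnm, hm0, hword⟩ := exists_ceil_mul_word_eq tau⁻¹ n k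
  refine ⟨m, hnm, hm0, fun i hi => ?_⟩
  rw [fibChain_add_one_sub, fibChain_add_one_sub, hword i hi]

/-- every `n`-letter word of the Fibonacci chain occurs with its
left-hand end among the points `λ_{-n}, …, λ_0`. -/
theorem statement13 (n : ℕ) (hn : 1 ≤ n) (k : ℤ) :
    ∃ m : ℤ, -(n : ℤ) ≤ m ∧ m ≤ 0 ∧
      ∀ i : ℕ, i < n →
        fibChain (k + (i : ℤ) + 1) - fibChain (k + (i : ℤ)) =
          fibChain (m + (i : ℤ) + 1) - fibChain (m + (i : ℤ)) :=
  statement13_general n k
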